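/- Let G be a finite simple graph, let z ≥ 0 be an integer, and let C₁, F₁, …, C_t, F_t be a z-antler-sequence for G. Then there exists a minimum feedback vertex set of G that contains all of C₁ ∪ ⋯ ∪ C_t and no vertex of F₁ ∪ ⋯ ∪ F_t. -/

import Mathlib

variable {V : Type*}

/-- The subgraph of `G` with edges restricted to the vertex set `S`
(kept on the same vertex type; vertices outside `S` become isolated).
Used to model the induced subgraph `G[S]` and vertex deletion `G - X = G[Xᶜ]`. -/
def graphRestrict (G : SimpleGraph V) (S : Set V) : SimpleGraph V where
  Adj u v := G.Adj u v ∧ u ∈ S ∧ v ∈ S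
  symm := ⟨fun _ _ h => ⟨h.1.symm, h.2.2, h.2.1⟩⟩
  loopless := ⟨fun v h => G.loopless.irrefl v h.1⟩

/-- `X` is a feedback vertex set of `G`: deleting `X` leaves an acyclic graph. -/
def IsFVS (G : SimpleGraph V) (X : Set V) : Prop :=
  (graphRestrict G Xᶜ).IsAcyclic

/-- The feedback vertex number of `G`: the minimum size of a feedback vertex set. -/
noncomputable def fvs (G : SimpleGraph V) : ℕ :=
  sInf {n | ∃ X : Set V, IsFVS G X ∧ X.ncard = n}

/-- `X` is a minimum feedback vertex set of `G`. -/
def IsMinFVS (G : SimpleGraph V) (X : Set V) : Prop :=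
  IsFVS G X ∧ ∀ Y : Set V, IsFVS G Y → X.ncard ≤ Y.ncard

/-- `(C, F)` is a feedback vertex cut in `G`: `C` and `F` are disjoint, `G[F]` is a
forest, and every tree of `G[F]` has at most one edge to `V(G) \ (C ∪ F)` (i.e. any two
edges from the same component of `G[F]` to the outside coincide). -/
def IsFVC (G : SimpleGraph V) (C F : Set V) : Prop :=
  Disjoint C F ∧ (graphRestrict G F).IsAcyclic ∧
    ∀ u₁ u₂ w₁ w₂ : V, u₁ ∈ F → u₂ ∈ F →
      (graphRestrict G F).Reachable u₁ u₂ →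
      w₁ ∉ C ∪ F → w₂ ∉ C ∪ F → G.Adj u₁ w₁ → G.Adj u₂ w₂ →
      u₁ = u₂ ∧ w₁ = w₂

/-- `(C, F)` is an antler in `G`: a feedback vertex cut with `|C| ≤ fvs(G[C ∪ F])`. -/
def IsAntler (G : SimpleGraph V) (C F : Set V) : Prop :=
  IsFVC G C F ∧ C.ncard ≤ fvs (graphRestrict G (C ∪ F))

/-- A graph `H` together with a vertex set `C` "has order `z`" if every connected
component `H'` of `H` satisfies `fvs(H') = |C ∩ V(H')| ≤ z`. -/
def HasCertOrder {W : Type*} (H : SimpleGraph W) (C : Set W) (z : ℕ) : Prop :=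
  ∀ v : W,
    fvs (graphRestrict H {u | H.Reachable u v}) = (C ∩ {u | H.Reachable u v}).ncard ∧
    (C ∩ {u | H.Reachable u v}).ncard ≤ z

/-- `H` is a `C`-certificate in `G`: a subgraph of `G` for which `C` is a minimum
feedback vertex set. -/
def IsCCertificate (G : SimpleGraph V) (C : Set V) (H : G.Subgraph) : Prop :=
  C ⊆ H.verts ∧ IsMinFVS H.coe {u : H.verts | (u : V) ∈ C}

/-- `H` is a `C`-certificate of order `z` in `G`. -/
def IsCCertificateOfOrder (G : SimpleGraph V) (C : Set V) (H : G.Subgraph) (z : ℕ) : Prop :=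
  IsCCertificate G C H ∧ HasCertOrder H.coe {u : H.verts | (u : V) ∈ C} z

/-- `(C, F)` is a `z`-antler in `G`: an antler such that `G[C ∪ F]` contains a
`C`-certificate of order `z`. -/
def IsZAntler (G : SimpleGraph V) (z : ℕ) (C F : Set V) : Prop :=
  IsAntler G C F ∧ ∃ H : G.Subgraph, H.verts ⊆ C ∪ F ∧ IsCCertificateOfOrder G C H z

/-- The function `f_r(x) = 2x³ + 3x² - x`. -/
def fr (x : ℕ) : ℕ := 2 * x ^ 3 + 3 * x ^ 2 - x

/-- A feedback vertex cut `(C, F)` is reducible if `|F| > f_r(|C|)`. -/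
def IsReducibleFVC (G : SimpleGraph V) (C F : Set V) : Prop :=
  IsFVC G C F ∧ fr C.ncard < F.ncard

/-- A feedback vertex cut `(C, F)` is simple if `|F| ≤ 2 f_r(|C|)` and either
`G[F]` is connected, or all trees of `G[F]` have a common neighbor `v` and there is a
single-tree feedback vertex cut `(C, F₂)` with `v ∈ F₂ \ F` and `F ⊆ F₂`. -/
def IsSimpleFVC (G : SimpleGraph V) (C F : Set V) : Prop :=
  IsFVC G C F ∧ F.ncard ≤ 2 * fr C.ncard ∧
    ((G.induce F).Connected ∨
      ∃ v : V,
        (∀ u ∈ F, ∃ u' ∈ F, (graphRestrict G F).Reachable u u' ∧ G.Adj u' v) ∧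
        ∃ F₂ : Set V, IsFVC G C F₂ ∧ (G.induce F₂).Connected ∧ v ∈ F₂ \ F ∧ F ⊆ F₂)

/-- `G` contains a `v`-flower of order `k`: `k` cycles whose vertex sets pairwise
intersect exactly in `{v}`. -/
def HasFlower (G : SimpleGraph V) (v : V) (k : ℕ) : Prop :=
  ∃ c : Fin k → G.Walk v v,
    (∀ i, (c i).IsCycle) ∧
    ∀ i j, i ≠ j → {x | x ∈ (c i).support} ∩ {x | x ∈ (c j).support} = {v}

/-- `G` contains `k` pairwise vertex-disjoint cycles. -/
def HasDisjointCycles (G : SimpleGraph V) (k : ℕ) : Prop :=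
  ∃ (b : Fin k → V) (c : ∀ i, G.Walk (b i) (b i)),
    (∀ i, (c i).IsCycle) ∧
    ∀ i j, i ≠ j → Disjoint {x | x ∈ (c i).support} {x | x ∈ (c j).support}

/-- `(C, F)` is a 1-antler in `G` (self-contained definition): `G[F]` is a forest,
every tree of `G[F]` has at most one edge to `V(G) \ (C ∪ F)`, and `G[C ∪ F]`
contains `|C|` pairwise vertex-disjoint cycles. -/
def IsOneAntler (G : SimpleGraph V) (C F : Set V) : Prop :=
  IsFVC G C F ∧ HasDisjointCycles (graphRestrict G (C ∪ F)) C.ncard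

/-- `C 1, F 1, …, C ℓ, F ℓ` is a `z`-antler-sequence for `G`: the sets are pairwise
disjoint and each `(C i, F i)` is a `z`-antler in `G` minus all earlier sets. -/
def IsAntlerSeq (G : SimpleGraph V) (z ℓ : ℕ) (C F : Fin ℓ → Set V) : Prop :=
  (∀ i j, i ≠ j → Disjoint (C i) (C j)) ∧
  (∀ i j, i ≠ j → Disjoint (F i) (F j)) ∧
  (∀ i j, Disjoint (C i) (F j)) ∧
  ∀ i, IsZAntler (graphRestrict G (⋃ j, ⋃ (_ : j < i), (C j ∪ F j))ᶜ) z (C i) (F i)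

/-!
If `(C, F)` is an antler of `G`, then `C` together with a minimum feedback vertex set of
`G − (C ∪ F)` is a minimum feedback vertex set of `G`. It is a feedback vertex set because a
cycle of `G − C` through a tree `T` of `G[F]` that does not stay inside `F` leaves `T` along
one edge and returns along another, whereas a feedback vertex cut allows `T` only one edge to
the rest of the graph. It is minimum because every feedback vertex set of `G` meets `C ∪ F` in
at least `fvs(G[C ∪ F]) ≥ |C|` vertices. Peeling off the antlers of the sequence one at a time
gives the theorem by induction.
-/

open SimpleGraph

section graphRestrict

lemma graphRestrict_le (G : SimpleGraph V) (S : Set V) : graphRestrict G S ≤ G :=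
  fun _ _ h => h.1

lemma graphRestrict_univ (G : SimpleGraph V) : graphRestrict G Set.univ = G := by
  ext u v; simp [graphRestrict]

lemma graphRestrict_graphRestrict (G : SimpleGraph V) (A B : Set V) :
    graphRestrict (graphRestrict G A) B = graphRestrict G (A ∩ B) := by
  ext u v
  simp only [graphRestrict, Set.mem_inter_iff]
  tauto

lemma mem_of_mem_support_graphRestrict {G : SimpleGraph V} {S : Set V} {u v x : V}
    {p : (graphRestrict G S).Walk u v} (hp : ¬ p.Nil) (hx : x ∈ p.support) : x ∈ S := by
  obtain ⟨e, he, hxe⟩ := (Walk.mem_support_iff_exists_mem_edges_of_not_nil hp).mp hx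
  induction e with
  | h a b =>
    have hab := p.adj_of_mem_edges he
    rcases Sym2.mem_iff.mp hxe with rfl | rfl
    exacts [hab.2.1, hab.2.2]

lemma not_isAcyclic_graphRestrict_of_isCycle {G : SimpleGraph V} {S : Set V} {v : V}
    {c : G.Walk v v} (hc : c.IsCycle) (hS : ∀ x ∈ c.support, x ∈ S) :
    ¬ (graphRestrict G S).IsAcyclic := by
  have hedges : ∀ e ∈ c.edges, e ∈ (graphRestrict G S).edgeSet := by
    intro e he
    induction e with
    | h x y =>
      exact ⟨c.adj_of_mem_edges he, hS x (c.fst_mem_support_of_mem_edges he),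
        hS y (c.snd_mem_support_of_mem_edges he)⟩
  exact fun h => h (c.transfer _ hedges) (hc.transfer hedges)

end graphRestrict

section FVS

lemma isFVS_univ (G : SimpleGraph V) : IsFVS G Set.univ :=
  fun v _ hc => mem_of_mem_support_graphRestrict hc.not_nil (Walk.start_mem_support _)
    (Set.mem_univ v)

lemma fvs_le_ncard {G : SimpleGraph V} {X : Set V} (h : IsFVS G X) : fvs G ≤ X.ncard :=
  Nat.sInf_le ⟨X, h, rfl⟩

lemma exists_isFVS_ncard_eq_fvs (G : SimpleGraph V) :
    ∃ X : Set V, IsFVS G X ∧ X.ncard = fvs G :=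
  Nat.sInf_mem (s := {n | ∃ X : Set V, IsFVS G X ∧ X.ncard = n})
    ⟨_, Set.univ, isFVS_univ G, rfl⟩

lemma exists_isMinFVS (G : SimpleGraph V) : ∃ X : Set V, IsMinFVS G X := by
  obtain ⟨X, hX, hcard⟩ := exists_isFVS_ncard_eq_fvs G
  exact ⟨X, hX, fun Y hY => hcard ▸ fvs_le_ncard hY⟩

lemma IsMinFVS.ncard_eq_fvs {G : SimpleGraph V} {S : Set V} (h : IsMinFVS G S) :
    S.ncard = fvs G := by
  obtain ⟨X, hX, hcard⟩ := exists_isFVS_ncard_eq_fvs G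
  exact le_antisymm (hcard ▸ h.2 X hX) (fvs_le_ncard h.1)

lemma IsFVS.inter_graphRestrict {G : SimpleGraph V} {S : Set V} (h : IsFVS G S) (A : Set V) :
    IsFVS (graphRestrict G A) (S ∩ A) := by
  refine IsAcyclic.anti ?_ h
  rintro u v ⟨⟨huv, hu, hv⟩, huS, hvS⟩
  exact ⟨huv, fun h => huS ⟨h, hu⟩, fun h => hvS ⟨h, hv⟩⟩

lemma IsMinFVS.inter_graphRestrict [Finite V] {G : SimpleGraph V} {A S : Set V}
    (h : IsMinFVS (graphRestrict G A) S) : IsMinFVS (graphRestrict G A) (S ∩ A) := by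
  refine ⟨?_, fun Y hY => (Set.ncard_inter_le_ncard_left S A).trans (h.2 Y hY)⟩
  simpa only [graphRestrict_graphRestrict, Set.inter_self] using h.1.inter_graphRestrict A

end FVS

section FVC

lemma IsFVC.support_subset_of_isTrail {G : SimpleGraph V} {C F : Set V} (h : IsFVC G C F)
    {u : V} (hu : u ∈ F) {c : G.Walk u u} (hc : c.IsTrail) (hC : ∀ x ∈ c.support, x ∉ C) :
    ∀ x ∈ c.support, x ∈ F := by
  classical
  by_contra! ⟨x, hx, hxF⟩
  -- `K` is the tree of `G[F]` containing `u`. The trail leaves `K` on its way to `x` and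
  -- re-enters it on the way back, along two different edges, both to `V \ (C ∪ F)`.
  set K : Set V := {y | y ∈ F ∧ (graphRestrict G F).Reachable u y}
  have huK : u ∈ K := ⟨hu, .rfl⟩
  have hxK : x ∉ K := fun h => hxF h.1
  have hout : ∀ a b, G.Adj a b → a ∈ K → b ∉ K → b ∈ c.support → b ∉ C ∪ F := by
    rintro a b hab ha hb hbc (hbC | hbF)
    exacts [hC b hbc hbC, hb ⟨hbF, ha.2.trans (Adj.reachable ⟨hab, ha.1, hbF⟩)⟩]
  obtain ⟨d₂, hd₂, hd₂K, hd₂K'⟩ := (c.takeUntil x hx).exists_boundary_dart K huK hxK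
  obtain ⟨d, hd, hdK', hdK⟩ :=
    (c.dropUntil x hx).exists_boundary_dart Kᶜ hxK (not_not.mpr huK)
  replace hdK := not_not.mp hdK
  have hd_out := hout _ _ d.adj.symm hdK hdK'
    (c.dart_fst_mem_support_of_mem_darts (c.darts_dropUntil_subset_darts hx hd))
  have hd₂_out := hout _ _ d₂.adj hd₂K hd₂K'
    (c.dart_snd_mem_support_of_mem_darts (c.darts_takeUntil_subset_darts hx hd₂))
  obtain ⟨hfst, hsnd⟩ := h.2.2 _ _ _ _ hdK.1 hd₂K.1 (hdK.2.symm.trans hd₂K.2)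
    hd_out hd₂_out d.adj.symm d₂.adj
  have hedge : d.edge = d₂.edge := by
    rw [← Dart.edge_symm d, Dart.ext d.symm d₂ (Prod.ext hfst hsnd)]
  have hnodup := hc.edges_nodup
  rw [← c.take_spec hx, Walk.edges_append, List.nodup_append] at hnodup
  exact hnodup.2.2 _ (List.mem_map_of_mem hd₂) _ (List.mem_map_of_mem hd) hedge.symm

lemma IsFVC.isFVS_union {G : SimpleGraph V} {C F X : Set V} (h : IsFVC G C F)
    (hX : IsFVS (graphRestrict G (C ∪ F)ᶜ) X) : IsFVS G (C ∪ X) := by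
  classical
  intro v c hc
  have hCX : ∀ {w : V} {p : (graphRestrict G (C ∪ X)ᶜ).Walk w w}, p.IsCycle →
      ∀ x ∈ p.support, x ∉ C ∪ X :=
    fun hp _ hx => mem_of_mem_support_graphRestrict hp.not_nil hx
  by_cases hF : ∃ u ∈ c.support, u ∈ F
  · obtain ⟨u, hu, huF⟩ := hF
    have hc' := (hc.rotate hu).mapLe (graphRestrict_le G _)
    refine not_isAcyclic_graphRestrict_of_isCycle hc' ?_ h.2.1
    refine h.support_subset_of_isTrail huF hc'.isTrail fun x hx hxC => ?_
    rw [Walk.support_mapLe_eq_support] at hx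
    exact hCX (hc.rotate hu) x hx (Or.inl hxC)
  · push Not at hF
    have hX' : (graphRestrict G ((C ∪ F)ᶜ ∩ Xᶜ)).IsAcyclic := by
      rw [← graphRestrict_graphRestrict]
      exact hX
    refine not_isAcyclic_graphRestrict_of_isCycle (hc.mapLe (graphRestrict_le G _)) ?_ hX'
    intro x hx
    rw [Walk.support_mapLe_eq_support] at hx
    have hxCX := hCX hc x hx
    exact ⟨fun hCF => hCF.elim (fun hC => hxCX (Or.inl hC)) (hF x hx),
      fun hxX => hxCX (Or.inr hxX)⟩

lemma IsAntler.isMinFVS_union [Finite V] {G : SimpleGraph V} {C F S : Set V}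
    (h : IsAntler G C F) (hS : IsMinFVS (graphRestrict G (C ∪ F)ᶜ) S) :
    IsMinFVS G (C ∪ S) := by
  refine ⟨h.1.isFVS_union hS.1, fun Y hY => ?_⟩
  calc (C ∪ S).ncard ≤ C.ncard + S.ncard := Set.ncard_union_le _ _
    _ ≤ (Y ∩ (C ∪ F)).ncard + (Y ∩ (C ∪ F)ᶜ).ncard := by
        refine add_le_add (h.2.trans (fvs_le_ncard (hY.inter_graphRestrict _))) ?_
        exact hS.ncard_eq_fvs ▸ fvs_le_ncard (hY.inter_graphRestrict _)
    _ = Y.ncard := by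
        rw [← Set.sdiff_eq]
        exact Set.ncard_inter_add_ncard_sdiff_eq_ncard Y (C ∪ F)

end FVC

section AntlerSeq

lemma iUnion_lt_succ {ℓ : ℕ} (f : Fin (ℓ + 1) → Set V) (i : Fin ℓ) :
    ⋃ j, ⋃ (_ : j < i.succ), f j = f 0 ∪ ⋃ j, ⋃ (_ : j < i), f j.succ := by
  rw [Set.iUnion_fin_add_one_eq_iUnion_succ (fun j => ⋃ (_ : j < i.succ), f j)]
  simp [Function.comp_def, Fin.succ_lt_succ_iff]

variable {G : SimpleGraph V} {z ℓ : ℕ} {C F : Fin (ℓ + 1) → Set V}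

lemma IsAntlerSeq.isAntler_zero (h : IsAntlerSeq G z (ℓ + 1) C F) : IsAntler G (C 0) (F 0) := by
  simpa [graphRestrict_univ] using (h.2.2.2 0).1

lemma IsAntlerSeq.tail (h : IsAntlerSeq G z (ℓ + 1) C F) :
    IsAntlerSeq (graphRestrict G (C 0 ∪ F 0)ᶜ) z ℓ (C ∘ Fin.succ) (F ∘ Fin.succ) := by
  obtain ⟨hCC, hFF, hCF, hz⟩ := h
  refine ⟨fun i j hij => hCC _ _ ((Fin.succ_injective _).ne hij),
    fun i j hij => hFF _ _ ((Fin.succ_injective _).ne hij), fun i j => hCF _ _, fun i => ?_⟩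
  rw [graphRestrict_graphRestrict, ← Set.compl_union]
  simpa only [iUnion_lt_succ (fun j => C j ∪ F j), Function.comp_apply] using hz i.succ

lemma IsAntlerSeq.exists_isMinFVS_of_tail [Finite V] (h : IsAntlerSeq G z (ℓ + 1) C F)
    {S : Set V} (hS : IsMinFVS (graphRestrict G (C 0 ∪ F 0)ᶜ) S)
    (hCS : ⋃ i, (C ∘ Fin.succ) i ⊆ S) (hSF : Disjoint S (⋃ i, (F ∘ Fin.succ) i)) :
    ∃ S' : Set V, IsMinFVS G S' ∧ (⋃ i, C i) ⊆ S' ∧ Disjoint S' (⋃ i, F i) := by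
  refine ⟨C 0 ∪ (S ∩ (C 0 ∪ F 0)ᶜ), h.isAntler_zero.isMinFVS_union hS.inter_graphRestrict,
    ?_, ?_⟩
  · rw [Set.iUnion_fin_add_one_eq_iUnion_succ]
    refine Set.union_subset_union_right _ (Set.subset_inter hCS ?_)
    rw [Set.subset_compl_iff_disjoint_right, Set.disjoint_union_right]
    exact ⟨Set.disjoint_iUnion_left.2 fun i => h.1 _ _ (Fin.succ_ne_zero i),
      Set.disjoint_iUnion_left.2 fun i => h.2.2.1 _ _⟩
  · rw [Set.iUnion_fin_add_one_eq_iUnion_succ, Set.disjoint_union_left,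
      Set.disjoint_union_right, Set.disjoint_union_right]
    exact ⟨⟨h.2.2.1 0 0, Set.disjoint_iUnion_right.2 fun i => h.2.2.1 _ _⟩,
      disjoint_compl_left.mono Set.inter_subset_right Set.subset_union_right,
      hSF.mono_left Set.inter_subset_left⟩

end AntlerSeq

theorem stmt15 [Fintype V] (G : SimpleGraph V) (z ℓ : ℕ) (C F : Fin ℓ → Set V)
    (h : IsAntlerSeq G z ℓ C F) :
    ∃ S : Set V, IsMinFVS G S ∧ (⋃ i, C i) ⊆ S ∧ Disjoint S (⋃ i, F i) := by
  induction ℓ generalizing G with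
  | zero =>
    obtain ⟨S, hS⟩ := exists_isMinFVS G
    exact ⟨S, hS, by simp, by simp⟩
  | succ ℓ ih =>
    obtain ⟨S, hS, hCS, hSF⟩ := ih _ _ _ h.tail
    exact h.exists_isMinFVS_of_tail hS hCS hSF
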